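/- arXiv:2310.01956 — 2 statements merged into one kernel-verified Lean document; each statement's English description precedes it below -/
import Mathlib

section
/- For a simple rank-3 matroid M on n elements, the beta invariant satisfies β(M) ≤ β(U_{3,n}) = C(n−2, 2), where U_{3,n} is the uniform matroid of rank 3 on n elements. -/
/- Chern numbers of matroids (Mannino). Background definitions. -/

open scoped Matroid
open Finset

namespace Paper

variable {α : Type*}

/-- The rank of a set in a matroid: the maximal size of an independent subset. -/
noncomputable def mrk (M : Matroid α) (X : Set α) : ℕ :=
  sSup (Set.ncard '' {I | M.Indep I ∧ I ⊆ X})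

/-- A matroid is simple if it has no loops and no parallel pairs, i.e. every
subset of the ground set with at most two elements is independent. -/
def Simple (M : Matroid α) : Prop := ∀ e ∈ M.E, ∀ f ∈ M.E, M.Indep {e, f}

/-- A matroid is loopless if every singleton of the ground set is independent. -/
def Loopless (M : Matroid α) : Prop := ∀ e ∈ M.E, M.Indep {e}

/-- A coloop is an element contained in every base. -/
def Coloop (M : Matroid α) (e : α) : Prop := e ∈ M.E ∧ ∀ B, M.IsBase B → e ∈ B

/-- `t M m` is the number of rank-2 flats of `M` of size `m`. -/
noncomputable def t (M : Matroid α) (m : ℕ) : ℕ :=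
  {F : Set α | M.IsFlat F ∧ mrk M F = 2 ∧ F.ncard = m}.ncard

/-- The first Chern number `c̄₁²` of a simple rank-3 matroid,
`9 - 5n + ∑_{m ≥ 2} (3m-4) t_m`. -/
noncomputable def c1sq (M : Matroid α) : ℤ :=
  9 - 5 * (M.E.ncard : ℤ) +
    ∑ m ∈ Finset.Icc 2 M.E.ncard, (3 * (m : ℤ) - 4) * t M m

/-- The second Chern number `c̄₂` of a simple rank-3 matroid,
`3 - 2n + ∑_{m ≥ 2} (m-1) t_m`. -/
noncomputable def c2 (M : Matroid α) : ℤ :=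
  3 - 2 * (M.E.ncard : ℤ) +
    ∑ m ∈ Finset.Icc 2 M.E.ncard, ((m : ℤ) - 1) * t M m

/-- The beta invariant of a matroid on a finite type (Crapo's formula):
`β(M) = (-1)^{r(E)} ∑_{S ⊆ E} (-1)^{|S|} r(S)`. -/
noncomputable def beta (M : Matroid α) [Fintype α] : ℤ :=
  (-1) ^ (mrk M M.E) *
    ∑ S ∈ (Set.toFinite M.E).toFinset.powerset,
      (-1 : ℤ) ^ S.card * (mrk M (S : Set α) : ℤ)

/-- `M` is the uniform matroid of rank `r` on its ground set: the independent
sets are exactly the finite subsets of the ground set of size at most `r`. -/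
def IsUniform (M : Matroid α) (r : ℕ) : Prop :=
  ∀ I, I ⊆ M.E → (M.Indep I ↔ I.Finite ∧ I.ncard ≤ r)

end Paper

open Paper

/-!
Crapo's formula is an alternating sum of `(-1)^|S| r(S)`. In a simple matroid of rank 3 every
rank is read off from the size of the set, except for sets of size at least 3 spanning only a
line: `r(S) = [|S| ≥ 1] + 2 [|S| ≥ 2] - [r(S) = 2]`. The alternating sums over sets of size at
least `k` are binomial coefficients, which gives `β(M) = 3 - 2n + ∑ (-1)^|S|` over the rank-2
sets `S`. Grouping these by the line they span, a line `L` contributes `|L| - 1 ≤ C(|L|, 2)`,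
and counting pairs of points line by line gives `∑_L C(|L|, 2) = C(n, 2)`. Finally
`3 - 2n + C(n, 2) = C(n - 2, 2)`.
-/

namespace Finset

variable {γ : Type*}

lemma sum_powerset_filter_card_lt {β : Type*} [AddCommMonoid β] (L : Finset γ) (k : ℕ)
    (f : ℕ → β) :
    ∑ S ∈ L.powerset.filter (fun S => #S < k), f #S =
      ∑ m ∈ range k, (#L).choose m • f m := by
  rw [← sum_fiberwise_of_maps_to (g := card) (t := range k)
    fun S hS => by simpa using (mem_filter.1 hS).2]
  refine sum_congr rfl fun m hm => ?_
  have hfiber : (L.powerset.filter (fun S => #S < k)).filter (fun S => #S = m) =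
      L.powersetCard m := by
    ext S
    simp only [mem_filter, mem_powerset, mem_powersetCard]
    grind
  rw [hfiber, ← card_powersetCard, ← sum_const]
  exact sum_congr rfl fun S hS => by rw [(mem_powersetCard.1 hS).2]

lemma sum_powerset_filter_le_card_neg_one_pow {L : Finset γ} (hL : L.Nonempty) (k : ℕ) :
    ∑ S ∈ L.powerset.filter (fun S => k + 1 ≤ #S), (-1 : ℤ) ^ #S =
      (-1) ^ (k + 1) * (#L - 1).choose k := by
  obtain ⟨n, hn⟩ : ∃ n, #L = n + 1 := Nat.exists_eq_add_one.2 hL.card_pos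
  have hsmall : ∑ S ∈ L.powerset.filter (fun S => ¬k + 1 ≤ #S), (-1 : ℤ) ^ #S =
      (-1) ^ k * n.choose k := by
    simp_rw [not_le, sum_powerset_filter_card_lt L (k + 1) (fun m => (-1 : ℤ) ^ m), hn,
      nsmul_eq_mul, mul_comm ((n + 1).choose _ : ℤ)]
    exact Int.alternating_sum_range_choose_eq_choose
  have htotal := sum_filter_add_sum_filter_not L.powerset (fun S => k + 1 ≤ #S)
    (fun S => (-1 : ℤ) ^ #S)
  rw [sum_powerset_neg_one_pow_card_of_nonempty hL, hsmall] at htotal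
  rw [hn, Nat.add_sub_cancel, pow_succ]
  linarith

end Finset

namespace Nat

lemma sub_one_le_choose_two (m : ℕ) : (m : ℤ) - 1 ≤ m.choose 2 := by
  cases m with
  | zero => simp
  | succ m =>
    rw [Nat.choose_succ_succ', Nat.choose_one_right]
    push_cast
    linarith [(m.choose 2).cast_nonneg (α := ℤ)]

lemma choose_two_sub_two {n : ℕ} (hn : 2 ≤ n) :
    ((n - 2).choose 2 : ℤ) = n.choose 2 - 2 * n + 3 := by
  obtain ⟨m, rfl⟩ := Nat.exists_eq_add_of_le' hn
  simp only [Nat.add_sub_cancel, Nat.choose_succ_succ', Nat.choose_one_right, Nat.choose_zero_right]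
  push_cast [Nat.choose_one_right]
  ring

end Nat

namespace Paper

variable {α : Type*} {M : Matroid α}

section Rank

variable [Finite α]

lemma mrk_eq_ncard_of_isBasis' {I X : Set α} (hI : M.IsBasis' I X) : mrk M X = I.ncard := by
  refine IsGreatest.csSup_eq ⟨⟨I, ⟨hI.indep, hI.subset⟩, rfl⟩, ?_⟩
  rintro _ ⟨J, ⟨hJ, hJX⟩, rfl⟩
  have h := hJ.encard_le_eRk_of_subset hJX
  rwa [← hI.encard_eq_eRk, ← (Set.toFinite J).cast_ncard_eq, ← (Set.toFinite I).cast_ncard_eq,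
    Nat.cast_le] at h

lemma cast_mrk (M : Matroid α) (X : Set α) : (mrk M X : ℕ∞) = M.eRk X := by
  obtain ⟨I, hI⟩ := M.exists_isBasis' X
  rw [mrk_eq_ncard_of_isBasis' hI, ← hI.encard_eq_eRk, (Set.toFinite I).cast_ncard_eq]

lemma _root_.Matroid.Indep.mrk_eq_ncard {I : Set α} (hI : M.Indep I) : mrk M I = I.ncard :=
  mrk_eq_ncard_of_isBasis' hI.isBasis_self.isBasis'

lemma mrk_mono {X Y : Set α} (h : X ⊆ Y) : mrk M X ≤ mrk M Y := by
  have := M.eRk_mono h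
  rwa [← cast_mrk, ← cast_mrk, Nat.cast_le] at this

lemma mrk_le_ncard (M : Matroid α) (X : Set α) : mrk M X ≤ X.ncard := by
  have := M.eRk_le_encard X
  rwa [← cast_mrk, ← (Set.toFinite X).cast_ncard_eq, Nat.cast_le] at this

lemma mrk_closure (M : Matroid α) (X : Set α) : mrk M (M.closure X) = mrk M X := by
  have := M.eRk_closure_eq X
  rwa [← cast_mrk, ← cast_mrk, Nat.cast_inj] at this

lemma _root_.Matroid.IsFlat.closure_eq_of_subset_of_mrk_eq {S F : Set α} (hF : M.IsFlat F)
    (hSF : S ⊆ F) (h : mrk M S = mrk M F) : M.closure S = F := by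
  rw [← hF.closure]
  refine (M.isRkFinite_of_finite (Set.toFinite S)).closure_eq_closure_of_subset_of_eRk_ge_eRk hSF ?_
  rw [← cast_mrk, ← cast_mrk, h]

end Rank

section Flats

variable [Fintype α]

open Classical in
noncomputable def flatsOfRank (M : Matroid α) (k : ℕ) : Finset (Finset α) :=
  {F | M.IsFlat ↑F ∧ mrk M ↑F = k}

lemma mem_flatsOfRank {k : ℕ} {F : Finset α} :
    F ∈ flatsOfRank M k ↔ M.IsFlat ↑F ∧ mrk M ↑F = k := by
  classical
  simp [flatsOfRank]

/-- Every rank-`k` set spans exactly one rank-`k` flat, its closure. -/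
theorem sum_mrk_eq_sum_flatsOfRank {β : Type*} [AddCommMonoid β] (M : Matroid α) (k : ℕ)
    (g : Finset α → β) :
    ∑ S ∈ (Set.toFinite M.E).toFinset.powerset.filter (fun S : Finset α => mrk M S = k), g S =
      ∑ F ∈ flatsOfRank M k,
        ∑ S ∈ F.powerset.filter (fun S : Finset α => mrk M S = k), g S := by
  classical
  let closure (S : Finset α) : Finset α := (Set.toFinite (M.closure ↑S)).toFinset
  have hmaps : ∀ S ∈ (Set.toFinite M.E).toFinset.powerset.filter
      (fun S : Finset α => mrk M S = k), closure S ∈ flatsOfRank M k := by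
    intro S hS
    simp only [mem_filter] at hS
    simpa [closure, mem_flatsOfRank, mrk_closure] using hS.2
  rw [← sum_fiberwise_of_maps_to hmaps]
  refine sum_congr rfl fun F hF => sum_congr ?_ fun _ _ => rfl
  obtain ⟨hFflat, hFk⟩ := mem_flatsOfRank.1 hF
  ext S
  simp only [mem_filter, mem_powerset, Set.Finite.subset_toFinset, closure]
  constructor
  · rintro ⟨⟨hSE, hSk⟩, rfl⟩
    exact ⟨fun x hx => by simpa using M.subset_closure ↑S hSE hx, hSk⟩
  · rintro ⟨hSF, hSk⟩
    have hSF' : (S : Set α) ⊆ F := by exact_mod_cast hSF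
    refine ⟨⟨hSF'.trans hFflat.subset_ground, hSk⟩, ?_⟩
    simp only [hFflat.closure_eq_of_subset_of_mrk_eq hSF' (hSk.trans hFk.symm),
      Finset.finite_toSet_toFinset]

end Flats

section Simple

lemma Simple.indep_of_card_le_two (hs : Simple M) {S : Finset α} (hSE : ↑S ⊆ M.E)
    (hS : #S ≤ 2) : M.Indep ↑S := by
  classical
  interval_cases h : #S
  · simp [card_eq_zero.1 h]
  · obtain ⟨e, rfl⟩ := card_eq_one.1 h
    simpa using hs e (hSE (by simp)) e (hSE (by simp))
  · obtain ⟨e, f, -, rfl⟩ := card_eq_two.1 h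
    simpa using hs e (hSE (by simp)) f (hSE (by simp))

variable [Finite α]

lemma Simple.mrk_eq_card (hs : Simple M) {S : Finset α} (hSE : ↑S ⊆ M.E) (hS : #S ≤ 2) :
    mrk M ↑S = #S := by
  rw [(hs.indep_of_card_le_two hSE hS).mrk_eq_ncard, Set.ncard_coe_finset]

lemma Simple.two_le_mrk (hs : Simple M) {S : Finset α} (hSE : ↑S ⊆ M.E) (hS : 2 ≤ #S) :
    2 ≤ mrk M ↑S := by
  obtain ⟨T, hTS, hT⟩ := exists_subset_card_eq hS
  have hTS' : (T : Set α) ⊆ S := by exact_mod_cast hTS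
  calc 2 = mrk M ↑T := by rw [hs.mrk_eq_card (hTS'.trans hSE) hT.le, hT]
    _ ≤ mrk M ↑S := mrk_mono hTS'

lemma Simple.mrk_eq_two_iff (hs : Simple M) {S : Finset α} (hSE : ↑S ⊆ M.E)
    (hS : mrk M ↑S ≤ 2) : mrk M ↑S = 2 ↔ 2 ≤ #S :=
  ⟨fun h => h ▸ Set.ncard_coe_finset S ▸ mrk_le_ncard M ↑S,
    fun h => hS.antisymm (hs.two_le_mrk hSE h)⟩

lemma Simple.mrk_eq_of_mrk_le_three (hs : Simple M) {S : Finset α} (hSE : ↑S ⊆ M.E)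
    (hS : mrk M ↑S ≤ 3) :
    (mrk M ↑S : ℤ) = (if 1 ≤ #S then 1 else 0) + (if 2 ≤ #S then 2 else 0) -
      (if mrk M ↑S = 2 then 1 else 0) := by
  rcases le_or_gt #S 2 with hS2 | hS2
  · rw [hs.mrk_eq_card hSE hS2]
    interval_cases #S <;> simp
  · have := hs.two_le_mrk hSE hS2.le
    interval_cases mrk M ↑S <;> simp [hS2.le, (by omega : 1 ≤ #S)]

end Simple

section Lines

variable [Fintype α]

lemma Simple.filter_mrk_eq_two_of_mem_flatsOfRank (hs : Simple M) {L : Finset α}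
    (hL : L ∈ flatsOfRank M 2) :
    L.powerset.filter (fun S : Finset α => mrk M S = 2) =
      L.powerset.filter (fun S => 2 ≤ #S) := by
  obtain ⟨hLflat, hL2⟩ := mem_flatsOfRank.1 hL
  refine filter_congr fun S hS => ?_
  have hSL : (S : Set α) ⊆ L := by exact_mod_cast mem_powerset.1 hS
  exact hs.mrk_eq_two_iff (hSL.trans hLflat.subset_ground) (hL2 ▸ mrk_mono hSL)

lemma Simple.sum_mrk_eq_two_neg_one_pow (hs : Simple M) :
    ∑ S ∈ (Set.toFinite M.E).toFinset.powerset.filter (fun S : Finset α => mrk M S = 2),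
      (-1 : ℤ) ^ #S = ∑ L ∈ flatsOfRank M 2, ((#L : ℤ) - 1) := by
  rw [sum_mrk_eq_sum_flatsOfRank]
  refine sum_congr rfl fun L hL => ?_
  have hLne : L.Nonempty := by
    have := mrk_le_ncard M L
    rw [(mem_flatsOfRank.1 hL).2, Set.ncard_coe_finset] at this
    exact card_pos.1 (by omega)
  rw [hs.filter_mrk_eq_two_of_mem_flatsOfRank hL, sum_powerset_filter_le_card_neg_one_pow hLne,
    Nat.choose_one_right, Nat.cast_sub hLne.card_pos]
  ring

/-- Every pair of points lies on exactly one line. -/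
lemma Simple.sum_choose_two_card_flatsOfRank_two (hs : Simple M) :
    ∑ L ∈ flatsOfRank M 2, (#L).choose 2 = M.E.ncard.choose 2 := by
  have hpairs := sum_mrk_eq_sum_flatsOfRank M 2 (fun S => if #S = 2 then 1 else 0)
  simp only [sum_boole, filter_filter, Nat.cast_id] at hpairs
  have hcount : ∀ X : Finset α, ↑X ⊆ M.E →
      #(X.powerset.filter fun S : Finset α => mrk M S = 2 ∧ #S = 2) = (#X).choose 2 := by
    intro X hXE
    rw [← card_powersetCard, powersetCard_eq_filter]
    refine congrArg card (filter_congr fun S hS => ⟨And.right, fun h => ⟨?_, h⟩⟩)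
    have hSE : (S : Set α) ⊆ M.E := (coe_subset.2 (mem_powerset.1 hS)).trans hXE
    rw [hs.mrk_eq_card hSE h.le, h]
  rw [hcount _ (by simp), ← Set.ncard_eq_toFinset_card] at hpairs
  rw [hpairs]
  exact sum_congr rfl fun L hL => (hcount L (mem_flatsOfRank.1 hL).1.subset_ground).symm

lemma Simple.beta_eq (hs : Simple M) (hr : mrk M M.E = 3) :
    beta M = 3 - 2 * M.E.ncard + ∑ L ∈ flatsOfRank M 2, ((#L : ℤ) - 1) := by
  set E := (Set.toFinite M.E).toFinset
  have hEne : E.Nonempty := by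
    rw [Set.Finite.toFinset_nonempty, Set.nonempty_iff_ne_empty]
    rintro hE
    simp [hE, M.empty_indep.mrk_eq_ncard] at hr
  have hsum : ∑ S ∈ E.powerset, (-1 : ℤ) ^ #S * mrk M ↑S =
      ∑ S ∈ E.powerset, (-1 : ℤ) ^ #S *
        ((if 1 ≤ #S then 1 else 0) + (if 2 ≤ #S then 2 else 0) -
          (if mrk M ↑S = 2 then 1 else 0)) := by
    refine sum_congr rfl fun S hS => ?_
    have hSE : (S : Set α) ⊆ M.E := by simpa [E] using hS
    rw [hs.mrk_eq_of_mrk_le_three hSE (hr ▸ mrk_mono hSE)]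
  simp only [mul_sub, mul_add, mul_ite, mul_zero, mul_one, sum_sub_distrib, sum_add_distrib,
    ← sum_filter, ← sum_mul] at hsum
  have h1 := sum_powerset_filter_le_card_neg_one_pow hEne 0
  have h2 := sum_powerset_filter_le_card_neg_one_pow hEne 1
  simp only [zero_add] at h1
  rw [beta, hr, hsum, h1, h2, hs.sum_mrk_eq_two_neg_one_pow, Set.ncard_eq_toFinset_card M.E,
    Nat.choose_zero_right, Nat.choose_one_right, Nat.cast_sub hEne.card_pos]
  push_cast
  ring

end Lines

end Paper

theorem stmt_7_general {α : Type*} [Fintype α] (M : Matroid α) (n : ℕ)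
    (hn : M.E.ncard = n)
    (hs : Simple M) (hr : mrk M M.E = 3) :
    beta M ≤ ((n - 2).choose 2 : ℤ) := by
  have hn2 : 2 ≤ n := by
    have := mrk_le_ncard M M.E
    omega
  calc beta M = 3 - 2 * n + ∑ L ∈ flatsOfRank M 2, ((#L : ℤ) - 1) := by rw [hs.beta_eq hr, hn]
    _ ≤ 3 - 2 * n + ∑ L ∈ flatsOfRank M 2, ((#L).choose 2 : ℤ) := by
      gcongr with L
      exact Nat.sub_one_le_choose_two #L
    _ = ((n - 2).choose 2 : ℤ) := by
      rw [← Nat.cast_sum, hs.sum_choose_two_card_flatsOfRank_two, hn, Nat.choose_two_sub_two hn2]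
      ring

/-- Brylawski's inequality in rank 3: for a simple rank-3 matroid on `n` elements,
`β(M) ≤ β(U_{3,n}) = C(n-2, 2)`. -/
theorem stmt_7 {α : Type*} [Fintype α] (M : Matroid α) (n : ℕ)
    (hground : M.E = Set.univ) (hn : M.E.ncard = n)
    (hs : Simple M) (hr : mrk M M.E = 3) :
    beta M ≤ ((n - 2).choose 2 : ℤ) :=
  stmt_7_general M n hn hs hr
end

section
/- Let M be a simple rank-3 matroid on n elements with no coloops. Then c̄₁²(M) ≤ 3·c̄₂(M); equivalently, n ≤ Σ_{m≥2} t_m, i.e. the number of rank-2 flats of M is at least the number of elements. -/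
/- Chern numbers of matroids (Mannino). Background definitions. -/

open scoped Matroid
open Finset

open Paper

/-!
The elements and the rank-2 flats ("lines") of a simple rank-3 matroid form a linear space: two
distinct points span exactly one line, no line contains every point, and every point misses
some line (extend it to a basis and take the span of the other two basis elements). The
de Bruijn–Erdős theorem, `Configuration.HasLines.card_le`, then gives at least as many lines as
points. Finally `3 c̄₂ - c̄₁² = ∑ t_m - n`, and `∑ t_m` counts the lines.
-/

namespace Paper

variable {α : Type*} {M : Matroid α} {X F : Set α} {e f : α}

theorem natCast_mrk [M.RankFinite] : (mrk M X : ℕ∞) = M.eRk X := by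
  obtain ⟨I, hI⟩ := M.exists_isBasis' X
  have hIfin : I.Finite := hI.indep.finite
  have hle : ∀ J, M.Indep J → J ⊆ X → J.ncard ≤ I.ncard := fun J hJ hJX => by
    have hJ' : J.encard ≤ I.encard := hI.eRk_eq_encard ▸ hJ.encard_le_eRk_of_subset hJX
    rw [← hJ.finite.cast_ncard_eq, ← hIfin.cast_ncard_eq] at hJ'
    exact_mod_cast hJ'
  have hmrk : mrk M X = I.ncard := by
    refine le_antisymm (csSup_le ⟨_, I, ⟨hI.indep, hI.subset⟩, rfl⟩ ?_)
      (le_csSup ⟨I.ncard, ?_⟩ ⟨I, ⟨hI.indep, hI.subset⟩, rfl⟩)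
    all_goals rintro _ ⟨J, ⟨hJ, hJX⟩, rfl⟩; exact hle J hJ hJX
  rw [hmrk, hIfin.cast_ncard_eq, hI.eRk_eq_encard]

theorem mrk_eq_iff [M.RankFinite] {k : ℕ} : mrk M X = k ↔ M.eRk X = k := by
  rw [← natCast_mrk, Nat.cast_inj]

def lines (M : Matroid α) : Set (Set α) := {F | M.IsFlat F ∧ mrk M F = 2}

theorem mem_lines_iff [M.RankFinite] : F ∈ lines M ↔ M.IsFlat F ∧ M.eRk F = 2 :=
  and_congr_right fun _ => mrk_eq_iff

theorem finite_lines [M.Finite] : (lines M).Finite :=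
  M.ground_finite.finite_subsets.subset fun _ hF => hF.1.subset_ground

theorem two_le_ncard_of_mem_lines [M.Finite] (hF : F ∈ lines M) : 2 ≤ F.ncard := by
  have hFfin : F.Finite := M.ground_finite.subset hF.1.subset_ground
  have h := (mem_lines_iff.1 hF).2 ▸ M.eRk_le_encard F
  rw [← hFfin.cast_ncard_eq] at h
  exact_mod_cast h

theorem ncard_lines_eq_sum_t [M.Finite] :
    (lines M).ncard = ∑ m ∈ Icc 2 M.E.ncard, t M m := by
  classical
  have hmaps : ∀ F ∈ finite_lines.toFinset, F.ncard ∈ Icc 2 M.E.ncard := fun F hF => by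
    rw [Set.Finite.mem_toFinset] at hF
    exact mem_Icc.2 ⟨two_le_ncard_of_mem_lines hF,
      Set.ncard_le_ncard hF.1.subset_ground M.ground_finite⟩
  rw [Set.ncard_eq_toFinset_card _ finite_lines, card_eq_sum_card_fiberwise hmaps]
  refine sum_congr rfl fun m _ => ?_
  rw [t, ← Set.ncard_coe_finset]
  congr 1
  ext F
  simp [lines, and_assoc]

theorem three_mul_c2_sub_c1sq (M : Matroid α) :
    3 * c2 M - c1sq M = ∑ m ∈ Icc 2 M.E.ncard, (t M m : ℤ) - M.E.ncard := by
  have hsum : ∑ m ∈ Icc 2 M.E.ncard, 3 * (((m : ℤ) - 1) * t M m)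
      = ∑ m ∈ Icc 2 M.E.ncard, ((3 * (m : ℤ) - 4) * t M m + t M m) :=
    sum_congr rfl fun _ _ => by ring
  rw [c1sq, c2, mul_add, mul_sum, hsum, sum_add_distrib]
  ring

theorem c1sq_le_three_mul_c2_iff :
    c1sq M ≤ 3 * c2 M ↔ M.E.ncard ≤ ∑ m ∈ Icc 2 M.E.ncard, t M m := by
  rw [← sub_nonneg, three_mul_c2_sub_c1sq, sub_nonneg]
  exact_mod_cast Iff.rfl

theorem closure_pair_mem_lines [M.RankFinite] (hs : Simple M) (he : e ∈ M.E) (hf : f ∈ M.E)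
    (hef : e ≠ f) : M.closure {e, f} ∈ lines M := by
  rw [mem_lines_iff, M.eRk_closure_eq, (hs e he f hf).eRk_eq_encard, Set.encard_pair hef]
  exact ⟨M.isFlat_closure _, rfl⟩

theorem eq_closure_pair_of_mem_lines [M.RankFinite] (hs : Simple M) (hF : F ∈ lines M)
    (he : e ∈ F) (hf : f ∈ F) (hef : e ≠ f) : F = M.closure {e, f} := by
  obtain ⟨hFflat, hF2⟩ := mem_lines_iff.1 hF
  have hpair := hs e (hFflat.subset_ground he) f (hFflat.subset_ground hf)
  rw [(M.isRkFinite_set _).closure_eq_closure_of_subset_of_eRk_ge_eRk (Set.pair_subset he hf)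
    (by rw [hF2, hpair.eRk_eq_encard, Set.encard_pair hef]), hFflat.closure]

theorem exists_mem_lines_notMem [M.RankFinite] (hs : Simple M) (hr : M.eRank = 3)
    {p : α} (hp : p ∈ M.E) : ∃ L ∈ lines M, p ∉ L := by
  obtain ⟨B, hB, hpB⟩ := (by simpa using hs p hp p hp : M.Indep {p}).exists_isBase_superset
  have hpB : p ∈ B := hpB rfl
  refine ⟨M.closure (B \ {p}), ?_, hB.indep.notMem_closure_sdiff_of_mem hpB⟩
  rw [mem_lines_iff, M.eRk_closure_eq, (hB.indep.subset Set.sdiff_subset).eRk_eq_encard,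
    Set.encard_sdiff_singleton_of_mem hpB, hB.encard_eq_eRank, hr]
  exact ⟨M.isFlat_closure _, rfl⟩

theorem exists_notMem_of_mem_lines [M.RankFinite] (hr : M.eRank = 3) (hF : F ∈ lines M) :
    ∃ p ∈ M.E, p ∉ F := by
  by_contra! hEF
  have h := (mem_lines_iff.1 hF).2
  rw [Set.Subset.antisymm (mem_lines_iff.1 hF).1.subset_ground hEF, M.eRk_ground, hr] at h
  exact absurd h (by decide)

instance : Membership M.E (lines M) := ⟨fun L p => (p : α) ∈ (L : Set α)⟩

@[reducible]
def hasLines [M.RankFinite] (hs : Simple M) (hr : M.eRank = 3) :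
    Configuration.HasLines M.E (lines M) where
  exists_point L := by
    obtain ⟨p, hpE, hpL⟩ := exists_notMem_of_mem_lines hr L.2
    exact ⟨⟨p, hpE⟩, hpL⟩
  exists_line p := by
    obtain ⟨L, hL, hpL⟩ := exists_mem_lines_notMem hs hr p.2
    exact ⟨⟨L, hL⟩, hpL⟩
  eq_or_eq {p q L L'} hpL hqL hpL' hqL' := or_iff_not_imp_left.2 fun hpq => Subtype.ext <| by
    have hpq' : (p : α) ≠ q := fun h => hpq (Subtype.ext h)
    rw [eq_closure_pair_of_mem_lines hs L.2 hpL hqL hpq',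
      eq_closure_pair_of_mem_lines hs L'.2 hpL' hqL' hpq']
  mkLine {p q} hpq := ⟨M.closure {(p : α), (q : α)},
    closure_pair_mem_lines hs p.2 q.2 fun h => hpq (Subtype.ext h)⟩
  mkLine_ax {p q} _ :=
    Set.pair_subset_iff.1 <| M.subset_closure _ (Set.pair_subset p.2 q.2)

theorem ncard_ground_le_ncard_lines [M.Finite] (hs : Simple M) (hr : M.eRank = 3) :
    M.E.ncard ≤ (lines M).ncard := by
  let := hasLines hs hr
  have : Fintype M.E := M.ground_finite.fintype
  have : Fintype (lines M) := finite_lines.fintype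
  simpa only [← Nat.card_coe_set_eq, Nat.card_eq_fintype_card] using
    Configuration.HasLines.card_le M.E (lines M)

end Paper

theorem stmt_10_general {α : Type*} (M : Matroid α) (n : ℕ) (hE : M.E.Finite)
    (hn : M.E.ncard = n) (hs : Simple M) (hr : mrk M M.E = 3) :
    c1sq M ≤ 3 * c2 M ∧ n ≤ {F : Set α | M.IsFlat F ∧ mrk M F = 2}.ncard := by
  subst hn
  have : M.Finite := ⟨hE⟩
  have hrank : M.eRank = 3 := M.eRk_ground ▸ mrk_eq_iff.1 hr
  have hlines := ncard_ground_le_ncard_lines hs hrank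
  exact ⟨c1sq_le_three_mul_c2_iff.2 (ncard_lines_eq_sum_t (M := M) ▸ hlines), hlines⟩

/-- For a simple rank-3 matroid on `n` elements with no coloops,
`c̄₁²(M) ≤ 3·c̄₂(M)`; equivalently the number of rank-2 flats is at least `n`. -/
theorem stmt_10 {α : Type*} (M : Matroid α) (n : ℕ) (hE : M.E.Finite)
    (hn : M.E.ncard = n) (hs : Simple M) (hr : mrk M M.E = 3)
    (hc : ∀ e, ¬ Coloop M e) :
    c1sq M ≤ 3 * c2 M ∧ n ≤ {F : Set α | M.IsFlat F ∧ mrk M F = 2}.ncard :=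
  stmt_10_general M n hE hn hs hr
end
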